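/- arXiv:2506.22976 — 9 statements merged into one kernel-verified Lean document; each statement's English description precedes it below -/
import Mathlib

section
/- Let λ ∈ ℝ with λ > 1, let a ∈ ℝ, and let f : ℝ → ℝ satisfy the functional equation x·f(λx) = x·f(x) + a·f(λx) for all x > 0, together with f(t) → 1 as t → +∞. Then for every x > 0, the family (1 − a/(λ^k x))_{k ∈ ℕ} is multipliable and f(x) = ∏_{k=0}^{∞} (1 − a/(λ^k x)). -/
open Filter

/-- `|log (1 - y)| ≤ 2 |y|` for `|y| ≤ 1/2`. -/
lemma abs_log_one_sub_le {y : ℝ} (hy : |y| ≤ 1 / 2) : |Real.log (1 - y)| ≤ 2 * |y| := by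
  have h1 : |y| < 1 := lt_of_le_of_lt hy (by norm_num)
  have := Real.abs_log_sub_add_sum_range_le h1 1
  simp only [Finset.sum_range_one, pow_one, pow_succ] at this
  have hb : |y| ^ 2 / (1 - |y|) ≤ |y| := by
    rw [div_le_iff₀ (by linarith)]
    nlinarith [abs_nonneg y, sq_nonneg y]
  have h2 : |Real.log (1 - y)| ≤ |y / (0 + 1) + Real.log (1 - y)| + |y| := by
    have := abs_sub_abs_le_abs_sub (y / (0 + 1) + Real.log (1 - y)) (y / (0 + 1))
    simp only [zero_add, div_one] at this ⊢
    calc |Real.log (1 - y)| = |y + Real.log (1 - y) - y| := by ring_nf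
    _ ≤ |y + Real.log (1 - y)| + |y| := abs_sub _ _
  calc |Real.log (1 - y)| ≤ |y / (0 + 1) + Real.log (1 - y)| + |y| := h2
    _ ≤ |y| ^ 2 / (1 - |y|) + |y| := by
        refine add_le_add_left ?_ _
        convert this using 2 <;> ring
    _ ≤ |y| + |y| := add_le_add_left hb _
    _ = 2 * |y| := by ring

set_option maxHeartbeats 1000000 in
/-- Solution of the proportional equation `x f(λx) = x f(x) + a f(λx)` with
`f(∞) = 1`: the infinite product `∏_{k=0}^∞ (1 − a/(λ^k x))`. -/
theorem prop_eq_sol_E (l a : ℝ) (hl : 1 < l) (f : ℝ → ℝ)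
    (hfe : ∀ x : ℝ, 0 < x → x * f (l * x) = x * f x + a * f (l * x))
    (hlim : Tendsto f atTop (nhds 1)) :
    ∀ x : ℝ, 0 < x →
      Multipliable (fun k : ℕ => 1 - a / (l ^ k * x)) ∧
      f x = ∏' k : ℕ, (1 - a / (l ^ k * x)) := by
  intro x hx
  have hl0 : 0 < l := lt_trans one_pos hl
  set t : ℕ → ℝ := fun k => a / (l ^ k * x) with ht
  -- summability of t
  have hsum : Summable t := by
    have : t = fun k => (a / x) * (1 / l) ^ k := by
      funext k
      rw [ht, div_pow, one_pow]
      field_simp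
    rw [this]
    exact (summable_geometric_of_lt_one (by positivity)
      (by rw [div_lt_one hl0]; linarith)).mul_left _
  -- eventually |t k| ≤ 1/2
  have htend : Tendsto t atTop (nhds 0) := hsum.tendsto_atTop_zero
  obtain ⟨N, hN⟩ := (Metric.tendsto_atTop.1 htend (1 / 2) (by norm_num))
  have hNsmall : ∀ k ≥ N, |t k| ≤ 1 / 2 := by
    intro k hk
    have := hN k hk
    rw [Real.dist_eq, sub_zero] at this
    exact le_of_lt this
  -- multipliability of the shifted sequence
  have hMs : Multipliable (fun n : ℕ => 1 - t (n + N)) := by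
    refine Real.multipliable_of_summable_log (f := fun n => 1 - t (n + N)) ?_ ?_
    · intro n
      have h := abs_le.1 (hNsmall (n + N) (Nat.le_add_left _ _))
      show 0 < 1 - t (n + N)
      linarith [h.2]
    ·
      refine Summable.of_norm_bounded
        (((hsum.comp_injective (add_left_injective N)).abs).mul_left 2) ?_
      intro n
      show ‖Real.log (1 - t (n + N))‖ ≤ _
      rw [Real.norm_eq_abs]
      exact abs_log_one_sub_le (hNsmall (n + N) (Nat.le_add_left _ _))
  have hM : Multipliable (fun k : ℕ => 1 - t k) := hMs.comp_nat_add
  refine ⟨hM, ?_⟩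
  -- the key identity
  have key : ∀ n : ℕ, f x = (∏ k ∈ Finset.range n, (1 - t k)) * f (l ^ n * x) := by
    intro n
    induction n with
    | zero => simp
    | succ n ih =>
      have hy : 0 < l ^ n * x := by positivity
      have step : f (l ^ n * x) = (1 - t n) * f (l ^ (n + 1) * x) := by
        have h := hfe (l ^ n * x) hy
        have hne : l ^ n * x ≠ 0 := ne_of_gt hy
        have h2 : (l ^ n * x - a) * f (l * (l ^ n * x)) = (l ^ n * x) * f (l ^ n * x) := by
          linarith [h]
        have : f (l ^ n * x) = ((l ^ n * x - a) / (l ^ n * x)) * f (l * (l ^ n * x)) := by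
          field_simp
          rw [mul_comm (l ^ n * x) l]
          linarith [h2]
        rw [this]
        congr 1
        · rw [ht]; field_simp
        · congr 1; ring
      rw [ih, step, Finset.prod_range_succ]
      ring
  -- limits
  have hP : Tendsto (fun n : ℕ => ∏ k ∈ Finset.range n, (1 - t k)) atTop
      (nhds (∏' k : ℕ, (1 - t k))) := hM.hasProd.tendsto_prod_nat
  have hxtend : Tendsto (fun n : ℕ => l ^ n * x) atTop atTop :=
    (tendsto_pow_atTop_atTop_of_one_lt hl).atTop_mul_const hx
  have hf1 : Tendsto (fun n : ℕ => f (l ^ n * x)) atTop (nhds 1) := hlim.comp hxtend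
  have : Tendsto (fun n : ℕ => (∏ k ∈ Finset.range n, (1 - t k)) * f (l ^ n * x)) atTop
      (nhds ((∏' k : ℕ, (1 - t k)) * 1)) := hP.mul hf1
  rw [mul_one] at this
  have hconst : Tendsto (fun _ : ℕ => f x) atTop (nhds (f x)) := tendsto_const_nhds
  have := tendsto_nhds_unique (this.congr (fun n => (key n).symm)) hconst
  exact this.symm
end

section
/- Let λ ∈ ℝ with λ > 1, let a ∈ ℝ, and let f : ℝ → ℝ satisfy the functional equation a·f(x) = x·f(x) − x·f(λx) for all x > 0, together with f(t) → 1 as t → +∞. Assume moreover that 1 − a/(λ^k x) ≠ 0 for all k ∈ ℕ and all x > 0 under consideration. Then for every x > 0 with a/(λ^k x) ≠ 1 for all k ∈ ℕ, one has f(x) = 1/∏_{k=0}^{∞} (1 − a/(λ^k x)), the infinite product being multipliable. -/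
open Filter Finset

lemma aux_shift_mult {g : ℕ → ℝ} (N : ℕ) (h : Multipliable fun n => g (n + N)) :
    Multipliable g := by
  have h1 : Multipliable (g ∘ (↑) : ((↑(Finset.range N) : Set ℕ)) → ℝ) := Multipliable.of_finite
  have h2 : Multipliable (g ∘ (↑) : (((↑(Finset.range N) : Set ℕ))ᶜ : Set ℕ) → ℝ) := by
    show Multipliable (g ∘ (↑) : {n // n ∉ range N} → ℝ)
    rw [← (notMemRangeEquiv N).symm.multipliable_iff]
    refine h.congr fun n => ?_
    simp [Function.comp, coe_notMemRangeEquiv_symm, Nat.add_comm]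
  exact h1.mul_compl h2

lemma aux_mult_one_sub {e : ℕ → ℝ} (hs : Summable e) (hb : ∀ n, |e n| ≤ 1/2) :
    Multipliable fun n => 1 - e n := by
  have hpos : ∀ n, 0 < 1 - e n := by
    intro n
    have := abs_le.1 (hb n)
    linarith [this.2]
  have hlog : Summable fun n => Real.log (1 - e n) := by
    apply Summable.of_abs
    apply Summable.of_nonneg_of_le (fun n => abs_nonneg _) (fun n => ?_) ((hs.abs).mul_left 2)
    have h1 : |e n| < 1 := lt_of_le_of_lt (hb n) (by norm_num)
    have := Real.abs_log_sub_add_sum_range_le h1 0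
    simp only [Finset.range_zero, Finset.sum_empty, zero_add] at this
    calc |Real.log (1 - e n)| ≤ |e n| ^ 1 / (1 - |e n|) := this
      _ ≤ 2 * |e n| := by
          rw [pow_one, div_le_iff₀ (by linarith [hb n])]
          nlinarith [abs_nonneg (e n), hb n]
  exact Real.multipliable_of_summable_log hpos hlog

/-- Solution of the proportional equation `a f(x) = x f(x) − x f(λx)` with
`f(∞) = 1`: the reciprocal of the infinite product `∏_{k=0}^∞ (1 − a/(λ^k x))`. -/
theorem prop_eq_sol_e (l a : ℝ) (hl : 1 < l) (f : ℝ → ℝ)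
    (hfe : ∀ x : ℝ, 0 < x → a * f x = x * f x - x * f (l * x))
    (hlim : Tendsto f atTop (nhds 1))
    (hne : ∀ x : ℝ, 0 < x → ∀ k : ℕ, 1 - a / (l ^ k * x) ≠ 0) :
    ∀ x : ℝ, 0 < x → (∀ k : ℕ, a / (l ^ k * x) ≠ 1) →
      Multipliable (fun k : ℕ => 1 - a / (l ^ k * x)) ∧
      f x = 1 / ∏' k : ℕ, (1 - a / (l ^ k * x)) := by
  intro x hx _
  have hl0 : (0:ℝ) < l := lt_trans one_pos hl
  set g : ℕ → ℝ := fun k => 1 - a / (l ^ k * x) with hg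
  -- recursion
  have hrec : ∀ y : ℝ, 0 < y → f (l * y) = f y * (1 - a / y) := by
    intro y hy
    have h := hfe y hy
    have hy' : y ≠ 0 := ne_of_gt hy
    field_simp
    nlinarith [h]
  have key : ∀ n : ℕ, f (l ^ n * x) = f x * ∏ k ∈ Finset.range n, g k := by
    intro n
    induction n with
    | zero => simp
    | succ n ih =>
      have hpos : 0 < l ^ n * x := mul_pos (pow_pos hl0 n) hx
      have h1 : l ^ (n + 1) * x = l * (l ^ n * x) := by ring
      rw [h1, hrec _ hpos, ih, Finset.prod_range_succ, hg]
      ring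
  have hpow : Tendsto (fun n : ℕ => l ^ n * x) atTop atTop :=
    Tendsto.atTop_mul_const hx (tendsto_pow_atTop_atTop_of_one_lt hl)
  have hfl : Tendsto (fun n : ℕ => f x * ∏ k ∈ Finset.range n, g k) atTop (nhds 1) := by
    have := hlim.comp hpow
    exact this.congr (fun n => key n)
  have hfx : f x ≠ 0 := by
    intro h0
    have h1 : Tendsto (fun _ : ℕ => (0:ℝ)) atTop (nhds 1) := by
      simpa [h0] using hfl
    exact one_ne_zero (tendsto_nhds_unique h1 tendsto_const_nhds)
  have hprod : Tendsto (fun n : ℕ => ∏ k ∈ Finset.range n, g k) atTop (nhds (f x)⁻¹) := by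
    have := hfl.const_mul (f x)⁻¹
    simp only [inv_mul_cancel_left₀ hfx] at this
    simpa using this
  -- Multipliability
  have hsum : Summable fun k : ℕ => a / (l ^ k * x) := by
    have hgeo : Summable fun k : ℕ => (a / x) * l⁻¹ ^ k :=
      (summable_geometric_of_lt_one (by positivity) (inv_lt_one_of_one_lt₀ hl)).mul_left _
    refine hgeo.congr fun k => ?_
    rw [inv_pow, ← div_eq_mul_inv, div_div, mul_comm x]
  have hN : ∀ᶠ k : ℕ in atTop, |a / (l ^ k * x)| ≤ 1/2 := by
    have h2 : Tendsto (fun k : ℕ => |a / (l ^ k * x)|) atTop (nhds 0) := by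
      simpa using hsum.tendsto_atTop_zero.abs
    exact h2.eventually_le_const (by norm_num)
  obtain ⟨N, hNk⟩ := eventually_atTop.1 hN
  have hmulN : Multipliable fun n : ℕ => g (n + N) := by
    have := aux_mult_one_sub (e := fun n => a / (l ^ (n + N) * x))
      ((summable_nat_add_iff N).mpr hsum) (fun n => hNk (n + N) (Nat.le_add_left _ _))
    exact this
  have hmul : Multipliable g := aux_shift_mult N hmulN
  refine ⟨hmul, ?_⟩
  have htp : Tendsto (fun n : ℕ => ∏ k ∈ Finset.range n, g k) atTop (nhds (∏' k, g k)) :=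
    hmul.hasProd.tendsto_prod_nat
  have heq : (∏' k, g k) = (f x)⁻¹ := tendsto_nhds_unique htp hprod
  rw [heq, one_div, inv_inv]
end

section
/- Let λ ∈ ℂ with 0 < |λ| < 1 and λ ≠ 0, let a ∈ ℂ, and let g : ℂ → ℂ be the function g(x) = ∏_{k=0}^{∞} (1 − a·λ^k·x) (which converges since |λ| < 1). Then for every n ∈ ℕ and every x ≠ 0: (i) if (1 − a·λ^k·x) ≠ 0 for all k < n, then (D_λ^n g)(x) = g(x)/(λ^{n(n−1)/2} · x^n · (ax;λ)_n); (ii) if (1 − a·λ^k·x) ≠ 0 for all k ∈ ℕ, then (D_λ^n (1/g))(x) = (ax;λ)_n/(λ^{n(n−1)/2} · x^n · g(x)). -/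
/-- The λ-derivative: `(D_λ f)(x) = f(λx)/x`. -/
noncomputable def lamD (l : ℂ) (f : ℂ → ℂ) : ℂ → ℂ := fun x => f (l * x) / x

/-- The finite q-Pochhammer symbol `(z;q)_n = ∏_{k=0}^{n-1} (1 − z q^k)`. -/
noncomputable def qPoch (z q : ℂ) (n : ℕ) : ℂ := ∏ k ∈ Finset.range n, (1 - z * q ^ k)

lemma aux_summable_log (l : ℂ) (habs : ‖l‖ < 1) (a x : ℂ) :
    Summable (fun n : ℕ => Complex.log (1 - a * l ^ n * x)) := by
  have hgeom : Summable (fun n : ℕ => (3/2 : ℝ) * ‖a * x‖ * ‖l‖ ^ n) := by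
    exact (summable_geometric_of_lt_one (norm_nonneg l) habs).mul_left _
  refine hgeom.of_norm_bounded_eventually_nat ?_
  have htend : Filter.Tendsto (fun n : ℕ => a * l ^ n * x) Filter.atTop (nhds 0) := by
    have := tendsto_pow_atTop_nhds_zero_of_norm_lt_one (x := l) habs
    have h2 := (this.const_mul a).mul_const x
    simpa using h2
  have hev : ∀ᶠ n : ℕ in Filter.atTop, ‖a * l ^ n * x‖ ≤ 1/2 := by
    have := htend.eventually (Metric.closedBall_mem_nhds (0 : ℂ) (by norm_num : (0:ℝ) < 1/2))
    filter_upwards [this] with n hn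
    simpa [Metric.mem_closedBall, dist_eq_norm] using hn
  filter_upwards [hev] with n hn
  have h1 : (1 : ℂ) - a * l ^ n * x = 1 + (-(a * l ^ n * x)) := by ring
  rw [h1]
  have := Complex.norm_log_one_add_half_le_self (z := -(a * l ^ n * x)) (by simpa using hn)
  calc ‖Complex.log (1 + -(a * l ^ n * x))‖ ≤ (3/2) * ‖-(a * l ^ n * x)‖ := this
    _ = (3/2 : ℝ) * ‖a * x‖ * ‖l‖ ^ n := by
        rw [norm_neg]
        have : ‖a * l ^ n * x‖ = ‖a * x‖ * ‖l‖ ^ n := by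
          rw [show a * l ^ n * x = (a * x) * l ^ n by ring, norm_mul, norm_pow]
        rw [this]; ring

lemma aux_multipliable (l : ℂ) (habs : ‖l‖ < 1) (a x : ℂ) :
    Multipliable (fun k : ℕ => 1 - a * l ^ k * x) := by
  by_cases h0 : ∃ j : ℕ, 1 - a * l ^ j * x = 0
  · obtain ⟨j, hj⟩ := h0
    refine ⟨0, ?_⟩
    have hev : ∀ᶠ s : Finset ℕ in Filter.atTop,
        (fun _ : Finset ℕ => (0 : ℂ)) s = ∏ i ∈ s, (1 - a * l ^ i * x) := by
      filter_upwards [Filter.eventually_ge_atTop ({j} : Finset ℕ)] with s hs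
      exact (Finset.prod_eq_zero (hs (Finset.mem_singleton_self j)) hj).symm
    exact Filter.Tendsto.congr' hev tendsto_const_nhds
  · push_neg at h0
    exact Complex.multipliable_of_summable_log (aux_summable_log l habs a x)

lemma aux_ne_zero (l : ℂ) (habs : ‖l‖ < 1) (a x : ℂ)
    (h0 : ∀ k : ℕ, 1 - a * l ^ k * x ≠ 0) :
    (∏' k : ℕ, (1 - a * l ^ k * x)) ≠ 0 := by
  have := Complex.cexp_tsum_eq_tprod (f := fun n => 1 - a * l ^ n * x) h0
    (aux_summable_log l habs a x)
  beta_reduce at this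
  rw [← this]
  exact Complex.exp_ne_zero _

set_option maxHeartbeats 2000000 in
/-- `n`-fold λ-derivatives of `(ax;λ)_∞` and of `1/(ax;λ)_∞`. -/
theorem lamD_iterate_infinite_qPoch (l : ℂ) (hl : l ≠ 0) (habs : ‖l‖ < 1)
    (habs' : 0 < ‖l‖) (a : ℂ)
    (g : ℂ → ℂ) (hg : ∀ x : ℂ, g x = ∏' k : ℕ, (1 - a * l ^ k * x))
    (n : ℕ) (x : ℂ) (hx : x ≠ 0) :
    ((∀ k : ℕ, k < n → 1 - a * l ^ k * x ≠ 0) →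
      (lamD l)^[n] g x = g x / (l ^ (n * (n - 1) / 2) * x ^ n * qPoch (a * x) l n)) ∧
    ((∀ k : ℕ, 1 - a * l ^ k * x ≠ 0) →
      (lamD l)^[n] (fun y => 1 / g y) x =
        qPoch (a * x) l n / (l ^ (n * (n - 1) / 2) * x ^ n * g x)) := by
  have hrec : ∀ y : ℂ, g y = (1 - a * y) * g (l * y) := by
    intro y
    have hm : Multipliable (fun n : ℕ => 1 - a * l ^ (n + 1) * y) :=
      (aux_multipliable l habs a (l * y)).congr (fun b => by ring_nf)
    rw [hg, hg, tprod_eq_zero_mul' hm]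
    simp only [pow_zero, mul_one]
    congr 1
    exact tprod_congr fun b => by ring_nf
  have hne : ∀ y : ℂ, (∀ k : ℕ, 1 - a * l ^ k * y ≠ 0) → g y ≠ 0 := by
    intro y hy
    rw [hg]
    exact aux_ne_zero l habs a y hy
  clear hg
  have hq : ∀ (y : ℂ) (m : ℕ), qPoch (a * y) l (m + 1) = qPoch (a * (l * y)) l m * (1 - a * y) := by
    intro y m
    unfold qPoch
    rw [Finset.prod_range_succ']
    simp only [pow_zero, mul_one]
    congr 1
    exact Finset.prod_congr rfl fun k _ => by ring_nf
  have hexp : ∀ m : ℕ, (m + 1) * ((m + 1) - 1) / 2 = m * (m - 1) / 2 + m := by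
    intro m; rcases m with _ | m <;> simp <;> ring_nf <;> omega
  constructor
  · -- part 1
    induction n generalizing x with
    | zero => intro _; simp [qPoch]
    | succ m ih =>
      intro hk
      have hx' : l * x ≠ 0 := mul_ne_zero hl hx
      have hk' : ∀ k : ℕ, k < m → 1 - a * l ^ k * (l * x) ≠ 0 := by
        intro k hkm
        have := hk (k + 1) (by omega)
        intro hcon; apply this
        rw [← hcon]; ring
      have h0 : 1 - a * x ≠ 0 := by simpa using hk 0 (by omega)
      rw [Function.iterate_succ_apply']
      show ((lamD l)^[m] g) (l * x) / x = _
      rw [ih (l * x) hx' hk', hrec x, hq x m, hexp m, div_div,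
        show l ^ (m * (m - 1) / 2 + m) * x ^ (m + 1) *
              (qPoch (a * (l * x)) l m * (1 - a * x)) =
            (1 - a * x) * (l ^ (m * (m - 1) / 2) * (l * x) ^ m * qPoch (a * (l * x)) l m * x)
          from by ring,
        mul_div_mul_left _ _ h0]
  · -- part 2
    induction n generalizing x with
    | zero => intro _; simp [qPoch]
    | succ m ih =>
      intro hk
      have hx' : l * x ≠ 0 := mul_ne_zero hl hx
      have hk' : ∀ k : ℕ, 1 - a * l ^ k * (l * x) ≠ 0 := by
        intro k
        have := hk (k + 1)
        intro hcon; apply this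
        rw [← hcon]; ring
      have h0 : 1 - a * x ≠ 0 := by simpa using hk 0
      rw [Function.iterate_succ_apply']
      show ((lamD l)^[m] (fun y => 1 / g y)) (l * x) / x = _
      rw [ih (l * x) hx' hk', hrec x, hq x m, hexp m, div_div,
        show qPoch (a * (l * x)) l m * (1 - a * x) =
            (1 - a * x) * qPoch (a * (l * x)) l m from mul_comm _ _,
        show l ^ (m * (m - 1) / 2 + m) * x ^ (m + 1) * ((1 - a * x) * g (l * x)) =
            (1 - a * x) * (l ^ (m * (m - 1) / 2) * (l * x) ^ m * g (l * x) * x)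
          from by ring,
        mul_div_mul_left _ _ h0]
end

section
/- Let λ ∈ ℂ with 0 < |λ| < 1, let a ∈ ℂ, and let g : ℂ → ℂ be the function g(x) = ∏_{k=0}^{∞} (1 − a·λ^k·x) (which converges since |λ| < 1). Then for every n ∈ ℕ and every x ∈ ℂ: (i) (Î_λ^n g)(x) = (x^n/λ^{n(n+1)/2}) · (λ^{−1}ax; λ^{−1})_n · g(x); (ii) if (1 − a·λ^k·x) ≠ 0 for all k ∈ ℕ and (1 − a·x/λ^j) ≠ 0 for all 1 ≤ j ≤ n, then (Î_λ^n (1/g))(x) = x^n/(λ^{n(n+1)/2} · (λ^{−1}ax; λ^{−1})_n · g(x)). -/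
open Filter Complex

private lemma summable_log_aux (l a y : ℂ) (h : ‖l‖ < 1) :
    Summable (fun k : ℕ => Complex.log (1 - a * l ^ k * y)) := by
  have hten : Tendsto (fun k : ℕ => ‖a * y‖ * ‖l‖ ^ k) atTop (nhds 0) := by
    simpa using (tendsto_pow_atTop_nhds_zero_of_lt_one (norm_nonneg l) h).const_mul ‖a * y‖
  apply Summable.of_norm_bounded_eventually_nat (g := fun k => 3 / 2 * ‖a * y‖ * ‖l‖ ^ k)
    (((summable_geometric_of_lt_one (norm_nonneg l) h)).mul_left _)
  filter_upwards [hten.eventually (gt_mem_nhds (by norm_num : (0 : ℝ) < 1 / 2))] with k hk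
  have hn : ‖-(a * l ^ k * y)‖ = ‖a * y‖ * ‖l‖ ^ k := by
    simp [norm_mul, norm_pow]; ring
  have := Complex.norm_log_one_add_half_le_self (z := -(a * l ^ k * y))
    (by rw [hn]; exact le_of_lt hk)
  rw [← sub_eq_add_neg, hn] at this
  calc ‖Complex.log (1 - a * l ^ k * y)‖ ≤ 3 / 2 * (‖a * y‖ * ‖l‖ ^ k) := this
    _ = 3 / 2 * ‖a * y‖ * ‖l‖ ^ k := by ring

private lemma multipliable_aux (l a y : ℂ) (h : ‖l‖ < 1) :
    Multipliable (fun k : ℕ => 1 - a * l ^ k * y) := by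
  by_cases hz : ∃ k, 1 - a * l ^ k * y = 0
  · obtain ⟨k0, hk0⟩ := hz
    refine ⟨0, ?_⟩
    rw [HasProd]
    have hev : (fun s : Finset ℕ => ∏ i ∈ s, (1 - a * l ^ i * y)) =ᶠ[atTop]
        (fun _ => (0 : ℂ)) := by
      filter_upwards [Filter.eventually_ge_atTop ({k0} : Finset ℕ)] with s hs
      exact Finset.prod_eq_zero (by simpa using hs) hk0
    refine (tendsto_congr' hev).mpr ?_
    exact tendsto_const_nhds
  · push_neg at hz
    exact Complex.multipliable_of_summable_log (summable_log_aux l a y h)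

set_option maxHeartbeats 1000000 in
private lemma tprod_shift_aux (l a x : ℂ) (hl : l ≠ 0) (h : ‖l‖ < 1) :
    (∏' k : ℕ, (1 - a * l ^ k * (x / l))) =
      (1 - l⁻¹ * a * x) * ∏' k : ℕ, (1 - a * l ^ k * x) := by
  have hx : ∀ y : ℂ, l * (y / l) = y := by intro y; field_simp
  have hfun : (fun k : ℕ => 1 - a * l ^ (k + 1) * (x / l)) =
      (fun k : ℕ => 1 - a * l ^ k * x) := by
    funext k
    have h3 : a * l ^ (k + 1) * (x / l) = a * l ^ k * (l * (x / l)) := by ring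
    rw [h3, hx]
  have hm : Multipliable (fun k : ℕ => 1 - a * l ^ (k + 1) * (x / l)) := by
    rw [hfun]; exact multipliable_aux l a x h
  rw [tprod_eq_zero_mul' hm, hfun]
  congr 1
  simp only [pow_zero, mul_one, div_eq_mul_inv]
  ring

/-- The λ-integral operator: `(Î_λ f)(x) = (x/λ) f(x/λ)`. -/
noncomputable def lamI (l : ℂ) (f : ℂ → ℂ) : ℂ → ℂ := fun x => x / l * f (x / l)

/-- `n`-fold λ-integrals of `(ax;λ)_∞` and of `1/(ax;λ)_∞`. -/
theorem lamI_iterate_infinite_qPoch (l : ℂ) (hl : l ≠ 0) (habs : ‖l‖ < 1)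
    (habs' : 0 < ‖l‖) (a : ℂ)
    (g : ℂ → ℂ) (hg : ∀ x : ℂ, g x = ∏' k : ℕ, (1 - a * l ^ k * x))
    (n : ℕ) (x : ℂ) :
    (lamI l)^[n] g x =
      x ^ n / l ^ (n * (n + 1) / 2) * qPoch (l⁻¹ * a * x) l⁻¹ n * g x ∧
    ((∀ k : ℕ, 1 - a * l ^ k * x ≠ 0) → (∀ j : ℕ, 1 ≤ j → j ≤ n → 1 - a * x / l ^ j ≠ 0) →
      (lamI l)^[n] (fun y => 1 / g y) x =
        x ^ n / (l ^ (n * (n + 1) / 2) * qPoch (l⁻¹ * a * x) l⁻¹ n * g x)) := by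
  have hnorm : ‖l‖ < 1 := habs
  -- key functional equation for g
  have hgx : ∀ y : ℂ, g (y / l) = (1 - l⁻¹ * a * y) * g y := by
    intro y
    rw [hg, hg, tprod_shift_aux l a y hl hnorm]
  -- exponent identity
  have hp : ∀ m : ℕ, l ^ ((m + 1) * (m + 1 + 1) / 2) = l ^ (m * (m + 1) / 2) * l ^ (m + 1) := by
    intro m
    rw [← pow_add]
    congr 1
    have h2 : (m + 1) * (m + 1 + 1) = m * (m + 1) + 2 * (m + 1) := by ring
    obtain ⟨c, hc⟩ := (Nat.even_mul_succ_self m).two_dvd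
    omega
  -- qPoch recursion
  have hq : ∀ m : ℕ, ∀ y : ℂ, qPoch (l⁻¹ * a * y) l⁻¹ (m + 1) =
      qPoch (l⁻¹ * a * (y / l)) l⁻¹ m * (1 - l⁻¹ * a * y) := by
    intro m y
    simp only [qPoch, Finset.prod_range_succ']
    congr 1
    · apply Finset.prod_congr rfl
      intro k _
      rw [pow_succ, div_eq_mul_inv]
      ring
    · simp
  induction n generalizing x with
  | zero =>
    constructor
    · simp [qPoch]
    · intro _ _
      simp [qPoch]
  | succ n ih =>
    constructor
    · rw [Function.iterate_succ_apply']
      show x / l * ((lamI l)^[n] g (x / l)) = _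
      rw [(ih (x / l)).1, hgx x, hq n x, hp n, div_pow]
      ring
    · intro h1 h2
      rw [Function.iterate_succ_apply']
      show x / l * ((lamI l)^[n] (fun y => 1 / g y) (x / l)) = _
      have h1' : ∀ k : ℕ, 1 - a * l ^ k * (x / l) ≠ 0 := by
        intro k
        cases k with
        | zero =>
          have := h2 1 le_rfl (by omega)
          rw [pow_one] at this
          simpa [mul_div_assoc] using this
        | succ k =>
          have heq : a * l ^ (k + 1) * (x / l) = a * l ^ k * x := by
            field_simp
            ring
          rw [heq]
          exact h1 k
      have h2' : ∀ j : ℕ, 1 ≤ j → j ≤ n → 1 - a * (x / l) / l ^ j ≠ 0 := by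
        intro j hj1 hj2
        have := h2 (j + 1) (by omega) (by omega)
        have heq : a * (x / l) / l ^ j = a * x / l ^ (j + 1) := by
          rw [← mul_div_assoc, div_div, ← pow_succ']
        rw [heq]
        exact this
      have key : ∀ D : ℂ, x / l * ((x / l) ^ n / D) = x ^ (n + 1) / (l ^ (n + 1) * D) := by
        intro D
        rw [div_pow]
        ring
      have hden : l ^ ((n + 1) * (n + 1 + 1) / 2) * qPoch (l⁻¹ * a * x) l⁻¹ (n + 1) * g x
          = l ^ (n + 1) *
            (l ^ (n * (n + 1) / 2) * qPoch (l⁻¹ * a * (x / l)) l⁻¹ n * g (x / l)) := by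
        rw [hp n, hq n x, hgx x]
        ring
      rw [(ih (x / l)).2 h1' h2', hden]
      exact key _
end

section
/- For all n, k ∈ ℕ, all a ∈ ℂ, and all x ∈ ℂ with x ≠ 0 such that 1 − a/(λ^i x) ≠ 0 for every 0 ≤ i < k, the k-fold λ-derivative of the function x ↦ (x−a)_λ^n satisfies D_λ^k (x−a)_λ^n = (1/(λ^{k(k−1)/2} · x^k)) · (x−a)_λ^{n+k}/(x−a)_λ^k. -/
/-- The λ-binomial `(x−a)_λ^n = ∏_{i=0}^{n-1} (1 − a/(λ^i x))`. -/
noncomputable def lamBinom (l a x : ℂ) (n : ℕ) : ℂ :=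
  ∏ i ∈ Finset.range n, (1 - a / (l ^ i * x))

lemma lamD_iter (l : ℂ) (k : ℕ) (g : ℂ → ℂ) (x : ℂ) :
    (lamD l)^[k] g x = g (l ^ k * x) / (l ^ (k * (k - 1) / 2) * x ^ k) := by
  induction k generalizing g x with
  | zero => simp [lamD]
  | succ k ih =>
    rw [Function.iterate_succ_apply, ih]
    simp only [lamD]
    rw [div_div]
    have hs : k * (k - 1) / 2 + k = (k + 1) * ((k + 1) - 1) / 2 := by
      cases k with
      | zero => rfl
      | succ m =>
        simp only [Nat.add_sub_cancel]
        have : (m + 1 + 1) * (m + 1) = (m + 1) * m + 2 * (m + 1) := by ring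
        omega
    congr 1
    · rw [pow_succ]; ring
    · rw [← hs, pow_add, pow_succ]; ring

/-- `D_λ^k (x−a)_λ^n = (1/(λ^{k(k-1)/2} x^k)) (x−a)_λ^{n+k}/(x−a)_λ^k`. -/
theorem lamD_iterate_lamBinom (l : ℂ) (hl : l ≠ 0) (n k : ℕ) (a x : ℂ) (hx : x ≠ 0)
    (h : ∀ i : ℕ, i < k → 1 - a / (l ^ i * x) ≠ 0) :
    (lamD l)^[k] (fun y => lamBinom l a y n) x =
      1 / (l ^ (k * (k - 1) / 2) * x ^ k) * (lamBinom l a x (n + k) / lamBinom l a x k) := by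
  rw [lamD_iter]
  have hk : lamBinom l a x k ≠ 0 :=
    Finset.prod_ne_zero_iff.mpr fun i hi => h i (Finset.mem_range.mp hi)
  have key : lamBinom l a x (n + k) = lamBinom l a x k * lamBinom l a (l ^ k * x) n := by
    rw [lamBinom, lamBinom, lamBinom, add_comm n k, Finset.prod_range_add]
    congr 1
    refine Finset.prod_congr rfl fun i _ => ?_
    rw [pow_add]; ring
  rw [key, mul_comm (lamBinom l a x k), mul_div_assoc, div_self hk, mul_one]
  ring
end

section
/- For all n, k ∈ ℕ with k ≤ n, all a ∈ ℂ, and all x ∈ ℂ with x ≠ 0, the k-fold λ-integral of the function x ↦ (x−a)_λ^n satisfies Î_λ^k (x−a)_λ^n = (x^k/λ^{k(k+1)/2}) · (λ^{−k}x − a)_λ^k · (x−a)_λ^{n−k}. -/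
lemma lamBinom_succ (l a x : ℂ) (m : ℕ) :
    lamBinom l a x (m + 1) = lamBinom l a x m * (1 - a / (l ^ m * x)) :=
  Finset.prod_range_succ _ _

lemma lamBinom_div (l a x : ℂ) (hl : l ≠ 0) (j : ℕ) :
    lamBinom l a (x / l) (j + 1) = (1 - a * l / x) * lamBinom l a x j := by
  unfold lamBinom
  rw [Finset.prod_range_succ', mul_comm]
  congr 1
  · simp [div_div_eq_mul_div]
  · refine Finset.prod_congr rfl fun i _ => ?_
    congr 2
    field_simp
    ring

/-- For `k ≤ n`, `Î_λ^k (x−a)_λ^n = (x^k/λ^{k(k+1)/2}) (λ^{−k}x−a)_λ^k (x−a)_λ^{n−k}`. -/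
theorem lamI_iterate_lamBinom (l : ℂ) (hl : l ≠ 0) (n k : ℕ) (hk : k ≤ n)
    (a x : ℂ) (hx : x ≠ 0) :
    (lamI l)^[k] (fun y => lamBinom l a y n) x =
      x ^ k / l ^ (k * (k + 1) / 2) * lamBinom l a (l ^ (-(k : ℤ)) * x) k *
        lamBinom l a x (n - k) := by
  induction k generalizing x with
  | zero => simp [lamBinom]
  | succ k ih =>
    have hk' : k ≤ n := Nat.le_of_succ_le hk
    have hxl : x / l ≠ 0 := div_ne_zero hx hl
    rw [Function.iterate_succ_apply']
    show x / l * ((lamI l)^[k] (fun y => lamBinom l a y n) (x / l)) = _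
    rw [ih hk' (x / l) hxl]
    have hsplit : (-((k+1 : ℕ) : ℤ)) = (-(k : ℤ)) + (-1) := by push_cast; ring
    have e1 : l ^ (-(k : ℤ)) * (x / l) = l ^ (-((k+1 : ℕ) : ℤ)) * x := by
      rw [hsplit, zpow_add₀ hl, zpow_neg_one, mul_assoc, inv_mul_eq_div]
    obtain ⟨j, hj⟩ : ∃ j, n - k = j + 1 := ⟨n - (k+1), by omega⟩
    have hj' : n - (k + 1) = j := by omega
    have harg : (l : ℂ) ^ k * (l ^ (-((k+1 : ℕ) : ℤ)) * x) = x / l := by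
      rw [show ((l : ℂ) ^ k) = l ^ ((k : ℕ) : ℤ) from (zpow_natCast l k).symm,
        ← mul_assoc, ← zpow_add₀ hl,
        show ((k : ℕ) : ℤ) + (-((k+1 : ℕ) : ℤ)) = -1 from by push_cast; ring,
        zpow_neg_one, inv_mul_eq_div]
    have hd : 2 ∣ k * (k + 1) := (Nat.even_mul_succ_self k).two_dvd
    have hpow : (k + 1) * (k + 1 + 1) / 2 = k * (k + 1) / 2 + (k + 1) := by
      obtain ⟨t, ht⟩ := hd
      rw [ht, Nat.mul_div_cancel_left _ two_pos,
        show (k+1) * (k+1+1) = 2 * (t + (k+1)) from by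
          rw [show (k+1)*(k+1+1) = k*(k+1) + 2*(k+1) from by ring, ht]; ring,
        Nat.mul_div_cancel_left _ two_pos]
    rw [e1, hj, lamBinom_div l a x hl j, hj', lamBinom_succ, harg, hpow,
      div_div_eq_mul_div]
    have key : x / l * ((x / l) ^ k / l ^ (k * (k + 1) / 2)) =
        x ^ (k + 1) / l ^ (k * (k + 1) / 2 + (k + 1)) := by
      rw [div_pow, pow_add, pow_succ]
      field_simp
      ring
    linear_combination (lamBinom l a (l ^ (-((k+1 : ℕ) : ℤ)) * x) k *
      ((1 - a * l / x) * lamBinom l a x j)) * key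
end

section
/- For every m ∈ ℕ, every k ∈ ℕ, every a ∈ ℂ, and every x ∈ ℂ with x ≠ 0 such that 1 − a/(λ^i x) ≠ 0 for every integer i with −m ≤ i < k (where λ^i is the integer power), the k-fold λ-derivative of the function x ↦ (x−a)_λ^{−m} satisfies D_λ^k (x−a)_λ^{−m} = (x−a)_λ^{−m+k}/(λ^{k(k−1)/2} · x^k · (x−a)_λ^k), where (x−a)_λ^z for an integer z is given by the stated definition for z ≥ 0 and by (x−a)_λ^{−m} := 1/(λ^{−m}x − a)_λ^m for z = −m < 0. -/
/-- The λ-binomial with integer exponent: for `z ≥ 0` it is `(x−a)_λ^z`, and for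
`z = −m < 0` it is `1/(λ^{−m}x − a)_λ^m`. -/
noncomputable def lamBinomZ (l a x : ℂ) (z : ℤ) : ℂ :=
  if 0 ≤ z then lamBinom l a x z.toNat else 1 / lamBinom l a (l ^ z * x) (-z).toNat

lemma lamBinomZ_neg' (l a x : ℂ) (m : ℕ) :
    lamBinomZ l a x (-(m : ℤ)) = 1 / lamBinom l a (l ^ (-(m : ℤ)) * x) m := by
  rcases m with _ | m
  · simp [lamBinomZ, lamBinom]
  · have h0 : ¬ (0 : ℤ) ≤ -((m + 1 : ℕ) : ℤ) := by omega
    rw [lamBinomZ, if_neg h0]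
    norm_num

lemma lamBinom_succ_left (l a x : ℂ) (n : ℕ) :
    lamBinom l a (l * x) n * (1 - a / x) = lamBinom l a x (n + 1) := by
  rw [lamBinom, lamBinom, Finset.prod_range_succ']
  congr 1
  · exact Finset.prod_congr rfl fun i _ => by rw [pow_succ]; ring_nf
  · simp

lemma key (l a x : ℂ) (hl : l ≠ 0) (hx : x ≠ 0) (h0 : 1 - a / x ≠ 0) (z : ℤ) :
    lamBinomZ l a (l * x) z = lamBinomZ l a x (z + 1) / (1 - a / x) := by
  rcases le_or_gt 0 z with hz | hz
  · lift z to ℕ using hz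
    have h1 : (0 : ℤ) ≤ (z : ℤ) := by omega
    have h2 : (0 : ℤ) ≤ (z : ℤ) + 1 := by omega
    rw [lamBinomZ, lamBinomZ, if_pos h1, if_pos h2]
    have e1 : ((z : ℤ) + 1).toNat = z + 1 := by omega
    have e2 : ((z : ℤ)).toNat = z := by omega
    rw [e1, e2, ← lamBinom_succ_left, mul_div_cancel_right₀ _ h0]
  · obtain ⟨m, rfl⟩ : ∃ m : ℕ, z = -((m + 1 : ℕ) : ℤ) := ⟨(-z).toNat - 1, by omega⟩
    have hz1 : -((m + 1 : ℕ) : ℤ) + 1 = -((m : ℕ) : ℤ) := by push_cast; ring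
    rw [hz1, lamBinomZ_neg', lamBinomZ_neg']
    have hy : l ^ (-((m + 1 : ℕ) : ℤ)) * (l * x) = l ^ (-((m : ℕ) : ℤ)) * x := by
      rw [← mul_assoc, ← zpow_add_one₀ hl]
      norm_num
    rw [hy, lamBinom, Finset.prod_range_succ, ← lamBinom]
    have hm : l ^ m * (l ^ (-((m : ℕ) : ℤ)) * x) = x := by
      rw [← mul_assoc, ← zpow_natCast l m, ← zpow_add₀ hl]
      simp
    rw [hm, div_div]

lemma auxdiv (A u d C X : ℂ) (hu : u ≠ 0) : A / u / (d * (C / u)) / X = A / (d * C * X) := by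
  have h1 : u * (C / u) = C := by rw [mul_comm, div_mul_cancel₀ _ hu]
  have h : u * (d * (C / u)) = d * C := by rw [mul_left_comm, h1]
  rw [div_div, div_div, ← mul_assoc, h]

lemma tri (k : ℕ) : k * (k - 1) / 2 + k = (k + 1) * k / 2 := by
  have h1 : k * (k - 1) / 2 = k.choose 2 := (Nat.choose_two_right k).symm
  have h2 : (k + 1) * ((k + 1) - 1) / 2 = (k + 1).choose 2 := (Nat.choose_two_right (k + 1)).symm
  have h3 : (k + 1).choose 2 = k.choose 1 + k.choose 2 := Nat.choose_succ_succ k 1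
  simp only [Nat.add_sub_cancel] at h2
  rw [h1, h2, h3, Nat.choose_one_right]
  omega

/-- `D_λ^k (x−a)_λ^{−m} = (x−a)_λ^{−m+k}/(λ^{k(k-1)/2} x^k (x−a)_λ^k)`. -/
theorem lamD_iterate_lamBinom_neg (l : ℂ) (hl : l ≠ 0) (m k : ℕ) (a x : ℂ) (hx : x ≠ 0)
    (h : ∀ i : ℤ, -(m : ℤ) ≤ i → i < (k : ℤ) → 1 - a / (l ^ i * x) ≠ 0) :
    (lamD l)^[k] (fun y => lamBinomZ l a y (-(m : ℤ))) x =
      lamBinomZ l a x (-(m : ℤ) + k) /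
        (l ^ (k * (k - 1) / 2) * x ^ k * lamBinom l a x k) := by
  induction k generalizing x with
  | zero => simp [lamBinom]
  | succ k ih =>
    have h0 : 1 - a / x ≠ 0 := by
      have := h 0 (by omega) (by omega)
      simpa using this
    have h' : ∀ i : ℤ, -(m : ℤ) ≤ i → i < (k : ℤ) → 1 - a / (l ^ i * (l * x)) ≠ 0 := by
      intro i hi1 hi2
      have := h (i + 1) (by omega) (by omega)
      have he : l ^ (i + 1) * x = l ^ i * (l * x) := by
        rw [zpow_add_one₀ hl]; ring
      rwa [he] at this
    rw [Function.iterate_succ_apply', lamD, ih (l * x) (mul_ne_zero hl hx) h']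
    rw [key l a x hl hx h0]
    have hB : lamBinom l a (l * x) k = lamBinom l a x (k + 1) / (1 - a / x) := by
      rw [← lamBinom_succ_left l a x k, mul_div_cancel_right₀ _ h0]
    rw [hB, mul_pow]
    have hexp : -(m : ℤ) + (k : ℤ) + 1 = -(m : ℤ) + ((k + 1 : ℕ) : ℤ) := by push_cast; ring
    rw [hexp]
    have hpow : (l : ℂ) ^ (k * (k - 1) / 2) * l ^ k = l ^ ((k + 1) * ((k + 1) - 1) / 2) := by
      rw [← pow_add, Nat.add_sub_cancel, tri]
    rw [auxdiv _ _ _ _ _ h0]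
    congr 1
    rw [← hpow, pow_succ]
    ring
end

section
/- For every integer n ∈ ℤ, every k ∈ ℕ with k ≥ 1, every a ∈ ℂ, and every x ∈ ℂ with x ≠ 0 such that 1 − a/(λ^i x) ≠ 0 for every integer i with min(n,0) − k ≤ i < 0 (where λ^i is the integer power), the k-fold λ-integral of the function x ↦ (x−a)_λ^n satisfies Î_λ^k (x−a)_λ^n = (x^k/λ^{k(k+1)/2}) · (λ^{−k}x − a)_λ^k · (x−a)_λ^{n−k}, where integer exponents of the λ-binomial are interpreted via (x−a)_λ^{−m} := 1/(λ^{−m}x − a)_λ^m for m ∈ ℕ. -/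
lemma lamI_iter (l : ℂ) (f : ℂ → ℂ) (k : ℕ) (x : ℂ) :
    (lamI l)^[k] f x = x ^ k / l ^ (k * (k + 1) / 2) * f (x / l ^ k) := by
  induction k generalizing f with
  | zero => simp
  | succ k ih =>
    rw [Function.iterate_succ_apply, ih]
    have hdd : x / l ^ k / l = x / l ^ (k + 1) := by
      rw [div_div, pow_succ]
    have hexp : (k + 1) * (k + 1 + 1) / 2 = k * (k + 1) / 2 + (k + 1) := by
      obtain ⟨m, hm⟩ := Nat.even_mul_succ_self k
      have h2 : (k + 1) * (k + 1 + 1) = k * (k + 1) + 2 * (k + 1) := by ring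
      omega
    simp only [lamI, hdd, hexp, pow_add, pow_succ]
    ring

lemma key_s15 (l : ℂ) (hl : l ≠ 0) (a x : ℂ) (n : ℤ) (k : ℕ)
    (h : ∀ i : ℤ, min n 0 - k ≤ i → i < 0 → 1 - a / (l ^ i * x) ≠ 0) :
    lamBinomZ l a (l ^ (-(k : ℤ)) * x) n =
      lamBinom l a (l ^ (-(k : ℤ)) * x) k * lamBinomZ l a x (n - k) := by
  set Q : ℤ → ℕ → ℂ := fun s m => ∏ i ∈ Finset.range m, (1 - a / (l ^ (s + i) * x)) with hQdef
  have hQ : ∀ (s : ℤ) (m : ℕ), lamBinom l a (l ^ s * x) m = Q s m := by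
    intro s m
    unfold lamBinom
    apply Finset.prod_congr rfl
    intro i _
    rw [← mul_assoc, ← zpow_natCast l i, ← zpow_add₀ hl, add_comm]
  have hQ0 : ∀ m : ℕ, lamBinom l a x m = Q 0 m := by
    intro m
    have := hQ 0 m
    rwa [zpow_zero, one_mul] at this
  have hZ : ∀ (s : ℤ) (z : ℤ), lamBinomZ l a (l ^ s * x) z =
      if 0 ≤ z then Q s z.toNat else 1 / Q (s + z) (-z).toNat := by
    intro s z
    unfold lamBinomZ
    split
    · exact hQ s z.toNat
    · rw [← mul_assoc, ← zpow_add₀ hl, add_comm z s, hQ]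
  have hZ0 : ∀ z : ℤ, lamBinomZ l a x z =
      if 0 ≤ z then Q 0 z.toNat else 1 / Q z (-z).toNat := by
    intro z
    have := hZ 0 z
    rw [zpow_zero, one_mul] at this
    rw [this]
    simp
  have hsplit : ∀ (s : ℤ) (m p : ℕ), Q s (m + p) = Q s m * Q (s + m) p := by
    intro s m p
    simp only [hQdef]
    rw [Finset.prod_range_add]
    congr 1
    apply Finset.prod_congr rfl
    intro i _
    congr 2
    push_cast
    ring
  have hne : ∀ (s : ℤ) (m : ℕ), s + m ≤ 0 → min n 0 - k ≤ s → Q s m ≠ 0 := by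
    intro s m hsm hs
    simp only [hQdef]
    rw [Finset.prod_ne_zero_iff]
    intro i hi
    simp only [Finset.mem_range] at hi
    exact h (s + i) (by omega) (by omega)
  rw [hQ, hZ, hZ0]
  rcases le_or_gt (k : ℤ) n with hnk | hnk
  · -- n ≥ k
    rw [if_pos (by omega), if_pos (by omega)]
    have : n.toNat = k + (n - k).toNat := by omega
    rw [this, hsplit]
    congr 2
    omega
  · rcases le_or_gt 0 n with hn0 | hn0
    · -- 0 ≤ n < k
      rw [if_pos hn0, if_neg (by omega)]
      have hB : Q (n - k) (k - n).toNat ≠ 0 := hne _ _ (by omega) (by omega)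
      have hs : Q (-(k : ℤ)) k = Q (-(k : ℤ)) n.toNat * Q (n - k) (k - n).toNat := by
        have := hsplit (-(k : ℤ)) n.toNat (k - n).toNat
        rw [show n.toNat + (k - n).toNat = k by omega,
            show -(k : ℤ) + n.toNat = n - k by omega] at this
        exact this
      rw [hs, show (-(n - k)).toNat = (k - n).toNat by omega]
      field_simp
    · -- n < 0
      rw [if_neg (by omega), if_neg (by omega)]
      have hB : Q (-(k : ℤ)) k ≠ 0 := hne _ _ (by omega) (by omega)
      have hs : Q (n - k) (-(n - k)).toNat = Q (n - k) (-n).toNat * Q (-(k : ℤ)) k := by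
        have := hsplit (n - k) (-n).toNat k
        rw [show (-n).toNat + k = (-(n - k)).toNat by omega,
            show n - k + ((-n).toNat : ℤ) = -(k : ℤ) by omega] at this
        exact this
      rw [hs, one_div, one_div, mul_inv,
          mul_comm (Q (n - (k:ℤ)) (-n).toNat)⁻¹, ← mul_assoc,
          mul_inv_cancel₀ hB, one_mul, show -(k : ℤ) + n = n - k by ring]

/-- For any integer `n` and `k ≥ 1`,
`Î_λ^k (x−a)_λ^n = (x^k/λ^{k(k+1)/2}) (λ^{−k}x−a)_λ^k (x−a)_λ^{n−k}`. -/
theorem lamI_iterate_lamBinomZ (l : ℂ) (hl : l ≠ 0) (n : ℤ) (k : ℕ) (hk : 1 ≤ k)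
    (a x : ℂ) (hx : x ≠ 0)
    (h : ∀ i : ℤ, min n 0 - k ≤ i → i < 0 → 1 - a / (l ^ i * x) ≠ 0) :
    (lamI l)^[k] (fun y => lamBinomZ l a y n) x =
      x ^ k / l ^ (k * (k + 1) / 2) * lamBinom l a (l ^ (-(k : ℤ)) * x) k *
        lamBinomZ l a x (n - k) := by
  rw [lamI_iter]
  have hxl : x / l ^ k = l ^ (-(k : ℤ)) * x := by
    rw [zpow_neg, zpow_natCast, div_eq_mul_inv, mul_comm]
  rw [hxl, key_s15 l hl a x n k h, mul_assoc]
end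

section
/- For all n, k ∈ ℕ, all a ∈ ℂ, and all x ∈ ℂ with x ≠ 0 such that 1 − a/(λ^i x) ≠ 0 for every 0 ≤ i < n + k, the k-fold λ-derivative of the function x ↦ 1/(x−a)_λ^n satisfies D_λ^k (1/(x−a)_λ^n) = (x−a)_λ^k/(λ^{k(k−1)/2} · x^k · (x−a)_λ^{n+k}). -/
lemma lamBinom_shift (l a x : ℂ) (m : ℕ) :
    (1 - a / x) * lamBinom l a (l * x) m = lamBinom l a x (m + 1) := by
  rw [lamBinom, lamBinom, Finset.prod_range_succ', pow_zero, one_mul, mul_comm]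
  congr 1
  refine Finset.prod_congr rfl fun i _ => ?_
  rw [pow_succ]
  ring_nf

lemma lamBinom_ne_zero (l a x : ℂ) (m N : ℕ) (hm : m ≤ N)
    (h : ∀ i : ℕ, i < N → 1 - a / (l ^ i * x) ≠ 0) : lamBinom l a x m ≠ 0 := by
  rw [lamBinom]
  exact Finset.prod_ne_zero_iff.2 fun i hi => h i (lt_of_lt_of_le (Finset.mem_range.1 hi) hm)

/-- `D_λ^k (1/(x−a)_λ^n) = (x−a)_λ^k/(λ^{k(k-1)/2} x^k (x−a)_λ^{n+k})`. -/
theorem lamD_iterate_inv_lamBinom (l : ℂ) (hl : l ≠ 0) (n k : ℕ) (a x : ℂ) (hx : x ≠ 0)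
    (h : ∀ i : ℕ, i < n + k → 1 - a / (l ^ i * x) ≠ 0) :
    (lamD l)^[k] (fun y => 1 / lamBinom l a y n) x =
      lamBinom l a x k / (l ^ (k * (k - 1) / 2) * x ^ k * lamBinom l a x (n + k)) := by
  induction k generalizing x with
  | zero => simp [lamBinom]
  | succ k ih =>
    have hlx : l * x ≠ 0 := mul_ne_zero hl hx
    have h' : ∀ i : ℕ, i < n + k → 1 - a / (l ^ i * (l * x)) ≠ 0 := by
      intro i hi
      have := h (i + 1) (by omega)
      rwa [show l ^ (i + 1) * x = l ^ i * (l * x) by rw [pow_succ]; ring] at this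
    rw [Function.iterate_succ_apply', lamD, ih (l * x) hlx h']
    have hs : 1 - a / x ≠ 0 := by
      have := h 0 (by omega); rwa [pow_zero, one_mul] at this
    have key1 := lamBinom_shift l a x k
    have key2 := lamBinom_shift l a x (n + k)
    have hB1 : lamBinom l a x (k + 1) ≠ 0 :=
      lamBinom_ne_zero l a x (k + 1) (n + (k + 1)) (by omega) h
    have hB2 : lamBinom l a x (n + (k + 1)) ≠ 0 :=
      lamBinom_ne_zero l a x (n + (k + 1)) (n + (k + 1)) le_rfl h
    have hlB1 : lamBinom l a (l * x) k = lamBinom l a x (k + 1) / (1 - a / x) := by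
      rw [eq_div_iff hs, mul_comm]; exact key1
    have hlB2 : lamBinom l a (l * x) (n + k) = lamBinom l a x (n + k + 1) / (1 - a / x) := by
      rw [eq_div_iff hs, mul_comm]; exact key2
    have hexp : (k + 1) * (k + 1 - 1) / 2 = k * (k - 1) / 2 + k := by
      rw [← Finset.sum_range_id, ← Finset.sum_range_id, Finset.sum_range_succ]
    have hlB2' : lamBinom l a (l * x) (n + k) ≠ 0 := by
      rw [hlB2]
      exact div_ne_zero (by rw [show n + k + 1 = n + (k + 1) by omega]; exact hB2) hs
    rw [hlB1, hlB2, hexp, show n + (k + 1) = n + k + 1 by omega]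
    have hpow : l ^ (k * (k - 1) / 2) ≠ 0 := pow_ne_zero _ hl
    have hB2n : lamBinom l a x (n + k + 1) ≠ 0 := by
      rw [show n + k + 1 = n + (k + 1) by omega]; exact hB2
    have hxa : x - a ≠ 0 := by
      intro hc
      rw [sub_eq_zero] at hc
      exact hs (by rw [← hc, div_self hx, sub_self])
    rw [pow_add, mul_pow]
    field_simp [hxa, hB2n]
    ring
end
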